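/- Let X be a real Banach space and let 𝒞 be a compatible class of bounded subsets of X. Then X has the 𝒞-UMIP if and only if for every ε > 0 there exists δ > 0 such that for every C ∈ 𝒞 with C ⊆ B(X) and every f ∈ S(X*) there is x ∈ S(X) with S(B(X*), x, δ) ⊆ cone(B_C(f, ε)), where cone(A) = {λa : λ ≥ 0, a ∈ A}. -/

import Mathlib

open Metric Set Pointwise

variable {X : Type*} [NormedAddCommGroup X] [NormedSpace ℝ X]

/-- The seminorm `‖f‖_A = sup {|f x| : x ∈ A}` on the dual, for a bounded set `A ⊆ X`. -/
noncomputable def semiNormOn (A : Set X) (f : StrongDual ℝ X) : ℝ :=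
  sSup ((fun x => |f x|) '' A)

/-- `B_A(f, ε) = {g ∈ X* : ‖f − g‖_A < ε}`. -/
def ballOn (A : Set X) (f : StrongDual ℝ X) (ε : ℝ) : Set (StrongDual ℝ X) :=
  {g | semiNormOn A (f - g) < ε}

/-- `diam_A(B) = sup {‖f − g‖_A : f, g ∈ B}`. -/
noncomputable def diamOn (A : Set X) (B : Set (StrongDual ℝ X)) : ℝ :=
  sSup ((fun p : StrongDual ℝ X × StrongDual ℝ X =>
    semiNormOn A (p.1 - p.2)) '' (B ×ˢ B))

/-- The w*-slice `S(B(X*), x, δ) = {f ∈ B(X*) : f x > 1 − δ}`. -/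
def wslice (x : X) (δ : ℝ) : Set (StrongDual ℝ X) :=
  {f | ‖f‖ ≤ 1 ∧ 1 - δ < f x}

/-- `D(x) = {f ∈ S(X*) : f x = 1}`. -/
def dualD (x : X) : Set (StrongDual ℝ X) :=
  {f | ‖f‖ = 1 ∧ f x = 1}

/-- `D(E) = ⋃ {D(y) : y ∈ E}`. -/
def dualDSet (E : Set X) : Set (StrongDual ℝ X) :=
  ⋃ y ∈ E, dualD y

/-- `d1(C, x, δ) = sup {(‖x + λ y‖ + ‖x − λ y‖ − 2)/λ : 0 < λ < δ, y ∈ C}`. -/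
noncomputable def d1 (C : Set X) (x : X) (δ : ℝ) : ℝ :=
  sSup {t | ∃ l : ℝ, ∃ y ∈ C, 0 < l ∧ l < δ ∧ t = (‖x + l • y‖ + ‖x - l • y‖ - 2) / l}

/-- `d2(C, x, δ) = diam_C (S(B(X*), x, δ))`. -/
noncomputable def d2 (C : Set X) (x : X) (δ : ℝ) : ℝ :=
  diamOn C (wslice x δ)

/-- `d3(C, x, δ) = diam_C (D(S(X) ∩ B(x, δ)))`. -/
noncomputable def d3 (C : Set X) (x : X) (δ : ℝ) : ℝ :=
  diamOn C (dualDSet ({y | ‖y‖ = 1} ∩ ball x δ))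

/-- `M_{ε, δ, C}(X)`. -/
noncomputable def Mset (ε δ : ℝ) (C : Set X) : Set X :=
  {x | ‖x‖ = 1 ∧
    sSup {t | ∃ y ∈ C, 0 < ‖y‖ ∧ ‖y‖ < δ ∧ t = (‖x + y‖ + ‖x - y‖ - 2) / ‖y‖} < ε}

/-- `M_{ε, C}(X) = ⋃_{δ > 0} M_{ε, δ, C}(X)`. -/
noncomputable def MsetAll (ε : ℝ) (C : Set X) : Set X :=
  ⋃ δ > 0, Mset ε δ C

/-- A compatible class of bounded subsets of `X`. -/
structure IsCompatibleClass (𝒞 : Set (Set X)) : Prop where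
  bounded : ∀ C ∈ 𝒞, Bornology.IsBounded C
  smul_add_mem : ∀ C ∈ 𝒞, ∀ (a : ℝ) (x : X), (fun y => a • y + x) '' C ∈ 𝒞
  union_singleton_mem : ∀ C ∈ 𝒞, ∀ x : X, C ∪ {x} ∈ 𝒞
  closedAbsConvexHull_mem : ∀ C ∈ 𝒞, closure (absConvexHull ℝ C) ∈ 𝒞
  subset_mem : ∀ C ∈ 𝒞, ∀ A ⊆ C, A ∈ 𝒞
  union_mem : ∀ C₁ ∈ 𝒞, ∀ C₂ ∈ 𝒞, C₁ ∪ C₂ ∈ 𝒞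

/-- `f ∈ S(X*)` is a strong `𝒞`-semidenting point of `B(X*)`. -/
def IsStrongSemidenting (𝒞 : Set (Set X)) (f : StrongDual ℝ X) : Prop :=
  ∀ A ∈ 𝒞, ∀ ε : ℝ, 0 < ε → ∃ x : X, ‖x‖ = 1 ∧ ∃ δ : ℝ, 0 < δ ∧ δ < 1 ∧
    wslice x δ ⊆ ballOn A f ε

/-- A set is the intersection of the closed balls containing it. -/
def IsBallIntersection (D : Set X) : Prop :=
  D = ⋂₀ {B : Set X | (∃ z : X, ∃ r : ℝ, 0 < r ∧ B = closedBall z r) ∧ D ⊆ B}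

/-- `X` has the strong `𝒞`-MIP. -/
def HasStrongCMIP (𝒞 : Set (Set X)) : Prop :=
  ∀ C ∈ 𝒞, IsClosed C → Convex ℝ C → ∀ β : ℝ, 0 ≤ β →
    IsBallIntersection (closure (C + closedBall (0 : X) β))

/-- A support mapping: a selection of the duality map `D`. -/
def IsSupportMapping (φ : X → StrongDual ℝ X) : Prop :=
  ∀ x : X, ‖x‖ = 1 → φ x ∈ dualD x

/-- The duality map on `X` is norm-`τ` quasicontinuous. -/
def DualityMapQuasicontinuous (𝒞 : Set (Set X)) : Prop :=
  ∀ f : StrongDual ℝ X, ‖f‖ = 1 → ∀ ε : ℝ, 0 < ε → ∀ C ∈ 𝒞,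
    ∃ δ : ℝ, 0 < δ ∧ ∃ x : X, ‖x‖ = 1 ∧
      dualDSet ({y | ‖y‖ = 1} ∩ ball x δ) ⊆ ballOn C f ε

/-- `cone(A) = {λ a : λ ≥ 0, a ∈ A}`. -/
def coneOf (A : Set (StrongDual ℝ X)) : Set (StrongDual ℝ X) :=
  {g | ∃ l : ℝ, 0 ≤ l ∧ ∃ a ∈ A, g = l • a}

/-- `X` has the `𝒞`-UMIP. -/
def HasCUMIP (𝒞 : Set (Set X)) : Prop :=
  ∀ ε : ℝ, 0 < ε → ∀ M : ℝ, 2 ≤ M → ∃ K : ℝ, 0 < K ∧ ∃ η : ℝ, 0 < η ∧ η ≤ ε ∧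
    ∀ C ∈ 𝒞, IsClosed C → Convex ℝ C → Metric.diam C ≤ M → ε ≤ Metric.infDist 0 C →
      ∃ z₀ : X, ∃ r : ℝ, 0 < r ∧ r ≤ K ∧ C ⊆ closedBall z₀ r ∧
        η ≤ Metric.infDist 0 (closedBall z₀ r)

/-
(⇒) Given `C ⊆ B(X)` and `f ∈ S(X*)` with `‖f‖_C ≥ ε`, pick `w ∈ acx(C)` with `f w > ‖f‖_C / 2`
and `u` with `f u ≈ 1`. Every `c ∈ C` is `(f c / f w) w + a` with `a ∈ A₀ = 3 acx(C) ∩ ker f`.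
The set `D = u + E`, where `E` is the closed absolutely convex hull of `(8/ε)(A₀ ∪ {w - f(w) u})`,
lies in `𝒞`, is bounded, and `f ≥ 1/2` on it. A functional `g` positive on `D` satisfies
`|g| < g u` on the balanced set `E`, so `g` is small on `A₀` and `g w ≈ f(w) g(u)`, whence
`g / λ ≈ f` on `C` for `λ = g w / f w`. The UMIP puts `D` in a ball far from `0`, and every
functional of a small slice in the direction of its centre is positive on that ball.

(⇐) Separate `C` from `0` by a norm-one `f` with `f ≥ ε` on `C` and apply the hypothesis to
`R⁻¹ C ∪ {u}` with `f u ≈ 1`. Perturbing a slice functional `g` to `(g - β f) / (1 + β)` shows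
that `g u` is bounded below, hence `g ≥ η > 0` on `C` for every `g` in a thinner slice at `x`;
by duality `C ⊆ B[t x, t - η]` for large `t`.
-/

theorem abs_apply_le_semiNormOn {A : Set X} (hA : Bornology.IsBounded A) (h : StrongDual ℝ X)
    {v : X} (hv : v ∈ A) : |h v| ≤ semiNormOn A h := by
  obtain ⟨R, hR⟩ := hA.subset_closedBall 0
  refine le_csSup ⟨‖h‖ * R, ?_⟩ (mem_image_of_mem _ hv)
  rintro _ ⟨w, hw, rfl⟩
  exact (h.le_opNorm w).trans (by gcongr; simpa using hR hw)

theorem semiNormOn_le {A : Set X} {h : StrongDual ℝ X} {b : ℝ} (hb : 0 ≤ b)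
    (H : ∀ v ∈ A, |h v| ≤ b) : semiNormOn A h ≤ b :=
  Real.sSup_le (by rintro _ ⟨v, hv, rfl⟩; exact H v hv) hb

theorem semiNormOn_nonneg (A : Set X) (h : StrongDual ℝ X) : 0 ≤ semiNormOn A h :=
  Real.sSup_nonneg (by rintro _ ⟨v, -, rfl⟩; exact abs_nonneg _)

theorem abs_sub_lt_of_mem_ballOn {A : Set X} (hA : Bornology.IsBounded A)
    {f g : StrongDual ℝ X} {ε : ℝ} (hg : g ∈ ballOn A f ε) {v : X} (hv : v ∈ A) :
    |f v - g v| < ε :=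
  (abs_apply_le_semiNormOn hA (f - g) hv).trans_lt hg

theorem exists_mem_lt_apply_of_lt_semiNormOn {A B : Set X} (hB : Balanced ℝ B) (hAB : A ⊆ B)
    {f : StrongDual ℝ X} {r : ℝ} (hr : 0 ≤ r) (h : r < semiNormOn A f) : ∃ w ∈ B, r < f w := by
  rcases A.eq_empty_or_nonempty with rfl | hA
  · simp [semiNormOn] at h; linarith
  obtain ⟨_, ⟨v, hv, rfl⟩, hlt : r < |f v|⟩ := exists_lt_of_lt_csSup (hA.image _) h
  rcases le_or_gt 0 (f v) with hfv | hfv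
  · exact ⟨v, hAB hv, by rwa [abs_of_nonneg hfv] at hlt⟩
  · exact ⟨-v, hB.neg_mem_iff.2 (hAB hv), by rwa [abs_of_neg hfv, ← map_neg] at hlt⟩

theorem mem_coneOf_ballOn_of_semiNormOn_lt {A : Set X} (hA : Bornology.IsBounded A)
    {f : StrongDual ℝ X} {ε : ℝ} (hf : semiNormOn A f < ε) (g : StrongDual ℝ X) :
    g ∈ coneOf (ballOn A f ε) := by
  set s := semiNormOn A f
  set t := semiNormOn A g
  have hs := semiNormOn_nonneg A f
  have ht := semiNormOn_nonneg A g
  set μ := (ε - s) / (2 * (t + 1))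
  have hμ : 0 < μ := div_pos (by linarith) (by positivity)
  have hμt : μ * t < ε - s := by
    rw [div_mul_eq_mul_div, div_lt_iff₀ (by positivity)]
    nlinarith
  refine ⟨μ⁻¹, inv_nonneg.2 hμ.le, μ • g, ?_, (inv_smul_smul₀ hμ.ne' g).symm⟩
  refine (semiNormOn_le (add_nonneg hs (by positivity)) fun v hv => ?_).trans_lt
    (by linarith : s + μ * t < ε)
  calc |f v - μ * g v| ≤ |f v| + μ * |g v| := by
        simpa [abs_mul, abs_of_pos hμ] using abs_sub (f v) (μ * g v)
    _ ≤ s + μ * t := by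
        gcongr
        exacts [abs_apply_le_semiNormOn hA f hv, abs_apply_le_semiNormOn hA g hv]

theorem wslice_mono (x : X) {δ δ' : ℝ} (h : δ ≤ δ') : wslice x δ ⊆ wslice x δ' :=
  fun _ hg => ⟨hg.1, by linarith [hg.2]⟩

theorem norm_le_of_forall_dual_le {y : X} {b : ℝ}
    (H : ∀ g : StrongDual ℝ X, ‖g‖ ≤ 1 → g y ≤ b) : ‖y‖ ≤ b := by
  obtain ⟨g, hg, hgy⟩ := exists_dual_vector'' ℝ y
  simpa [hgy] using H g hg

theorem exists_norm_le_one_lt_apply {f : StrongDual ℝ X} {r : ℝ} (hr : r < ‖f‖) :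
    ∃ u : X, ‖u‖ ≤ 1 ∧ r < f u := by
  obtain ⟨u, hu, hru⟩ := f.exists_lt_apply_of_lt_opNorm hr
  rcases le_or_gt 0 (f u) with h | h
  · exact ⟨u, hu.le, by rwa [Real.norm_of_nonneg h] at hru⟩
  · exact ⟨-u, by rw [norm_neg]; exact hu.le, by rwa [Real.norm_of_nonpos h.le, ← map_neg] at hru⟩

theorem exists_norm_eq_one_le_apply_of_le_infDist {C : Set X} (hC : Convex ℝ C) {ε : ℝ}
    (hε : 0 < ε) (hd : ε ≤ infDist 0 C) :
    ∃ f : StrongDual ℝ X, ‖f‖ = 1 ∧ ∀ c ∈ C, ε ≤ f c := by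
  have hdisj : Disjoint (ball (0 : X) ε) C := by
    refine Set.disjoint_left.2 fun v hv hvC => ?_
    have := infDist_le_dist_of_mem (x := 0) hvC
    rw [mem_ball_zero_iff] at hv
    rw [dist_zero_left] at this
    linarith
  obtain ⟨f, u, hball, hC⟩ := geometric_hahn_banach_open (convex_ball 0 ε) isOpen_ball hC hdisj
  have hnorm : ‖f‖ * ε ≤ u := by
    by_contra! h
    obtain ⟨x, hx, hfx⟩ := f.exists_lt_apply_of_lt_opNorm (r := u / ε) (by rwa [div_lt_iff₀ hε])
    have hεx : ε • x ∈ ball (0 : X) ε := by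
      rw [mem_ball_zero_iff, norm_smul, Real.norm_of_nonneg hε.le]
      nlinarith
    have h₁ := hball _ hεx
    have h₂ := hball (-(ε • x)) (by rwa [mem_ball_zero_iff, norm_neg, ← mem_ball_zero_iff])
    rw [map_neg] at h₂
    rw [map_smul, smul_eq_mul] at h₁ h₂
    rw [div_lt_iff₀ hε, Real.norm_eq_abs] at hfx
    cases abs_cases (f x) <;> nlinarith
  obtain ⟨c, hc⟩ : C.Nonempty := nonempty_iff_ne_empty.2 fun h => by
    rw [h, infDist_empty] at hd; linarith
  have hu : 0 < u := by simpa using hball 0 (mem_ball_self hε)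
  have hf : 0 < ‖f‖ := norm_pos_iff.2 fun h => by simpa [h] using hu.trans_le (hC c hc)
  refine ⟨‖f‖⁻¹ • f, by rw [norm_smul, norm_inv, norm_norm, inv_mul_cancel₀ hf.ne'], fun c hc => ?_⟩
  rw [show (‖f‖⁻¹ • f) c = ‖f‖⁻¹ * f c from rfl, le_inv_mul_iff₀ hf]
  linarith [hC c hc]

theorem infDist_zero_closedBall {z : X} {r : ℝ} (hr : 0 ≤ r) :
    infDist 0 (closedBall z r) = max (‖z‖ - r) 0 := by
  refine le_antisymm ?_ ((le_infDist (nonempty_closedBall.2 hr)).2 fun y hy => ?_)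
  · rcases le_or_gt ‖z‖ r with h | h
    · rw [infDist_zero_of_mem (by simpa [dist_comm] using h)]
      exact le_max_right _ _
    · have hz : 0 < ‖z‖ := hr.trans_lt h
      have hy : (1 - r / ‖z‖) • z ∈ closedBall z r := by
        rw [mem_closedBall, dist_eq_norm, sub_smul, one_smul, sub_sub_cancel_left, norm_neg,
          norm_smul, Real.norm_of_nonneg (by positivity), div_mul_cancel₀ _ hz.ne']
      refine (infDist_le_dist_of_mem hy).trans (le_of_eq_of_le ?_ (le_max_left _ _))
      rw [dist_zero_left, norm_smul,
        Real.norm_of_nonneg (by rw [sub_nonneg, div_le_one hz]; exact h.le)]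
      field_simp
  · rw [dist_zero_left]
    refine max_le ?_ (norm_nonneg y)
    have := norm_sub_norm_le z y
    rw [mem_closedBall, dist_eq_norm, norm_sub_rev] at hy
    linarith

theorem le_infDist_zero_of_le_apply {D : Set X} (hD : D.Nonempty) {f : StrongDual ℝ X}
    (hf : ‖f‖ ≤ 1) {b : ℝ} (h : ∀ d ∈ D, b ≤ f d) : b ≤ infDist 0 D := by
  refine (le_infDist hD).2 fun d hd => ?_
  rw [dist_zero_left]
  calc b ≤ f d := h d hd
    _ ≤ ‖f‖ * ‖d‖ := (le_abs_self _).trans (f.le_opNorm d)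
    _ ≤ ‖d‖ := mul_le_of_le_one_left (norm_nonneg d) hf

theorem subset_closedBall_zero_of_infDist_lt {E : Type*} [SeminormedAddGroup E] {C : Set E}
    (hC : Bornology.IsBounded C) {s M : ℝ} (hs : infDist 0 C < s) (hM : diam C ≤ M) :
    C ⊆ closedBall 0 (s + M) := by
  rcases C.eq_empty_or_nonempty with rfl | hne
  · exact empty_subset _
  obtain ⟨c₀, hc₀, hdist⟩ := (infDist_lt_iff hne).1 hs
  intro c hc
  rw [mem_closedBall, dist_zero_right]
  have := dist_triangle c c₀ 0
  rw [dist_zero_left] at hdist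
  rw [dist_zero_right, dist_zero_right] at this
  linarith [(dist_le_diam_of_mem hC hc hc₀).trans hM]

theorem subset_closedBall_and_sub_le_infDist {C : Set X} (hC : Bornology.IsBounded C) {c : X}
    (hc : c ∈ C) {M : ℝ} (hM₀ : 0 ≤ M) (hM : diam C ≤ M) :
    C ⊆ closedBall c M ∧ infDist 0 C - M ≤ infDist 0 (closedBall c M) := by
  refine ⟨fun d hd => (dist_le_diam_of_mem hC hd hc).trans hM, ?_⟩
  have := infDist_le_dist_of_mem (x := 0) hc
  rw [dist_zero_left] at this
  rw [infDist_zero_closedBall hM₀]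
  exact le_max_of_le_left (by linarith)

theorem closedAbsConvexHull_subset_preimage_closedBall {Y : Type*} [NormedAddCommGroup Y]
    [NormedSpace ℝ Y] (T : X →L[ℝ] Y) {s : Set X} {b : ℝ} (hs : s ⊆ T ⁻¹' closedBall 0 b) :
    closedAbsConvexHull ℝ s ⊆ T ⁻¹' closedBall 0 b :=
  closedAbsConvexHull_min hs
    ⟨balanced_closedBall_zero.mulActionHom_preimage (T : X →ₗ[ℝ] Y).toMulActionHom,
      (convex_closedBall 0 b).linear_preimage (T : X →ₗ[ℝ] Y)⟩
    (isClosed_closedBall.preimage T.continuous)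

theorem closedAbsConvexHull_smul_subset_preimage_closedBall {Y : Type*} [NormedAddCommGroup Y]
    [NormedSpace ℝ Y] (T : X →L[ℝ] Y) {s : Set X} {a b : ℝ} (ha : 0 ≤ a)
    (hs : s ⊆ T ⁻¹' closedBall 0 b) :
    closedAbsConvexHull ℝ (a • s) ⊆ T ⁻¹' closedBall 0 (a * b) := by
  refine closedAbsConvexHull_subset_preimage_closedBall T ?_
  rintro _ ⟨y, hy, rfl⟩
  rw [mem_preimage, map_smul, mem_closedBall_zero_iff, norm_smul, Real.norm_of_nonneg ha]
  exact mul_le_mul_of_nonneg_left (mem_closedBall_zero_iff.1 (hs hy)) ha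

theorem AbsConvex.sub_smul_mem_three_smul {A : Set X} (hA : AbsConvex ℝ A) {c w : X}
    (hc : c ∈ A) (hw : w ∈ A) {t : ℝ} (ht : |t| ≤ 2) : c - t • w ∈ (3 : ℝ) • A := by
  have htw : (-(t / 2)) • w ∈ A :=
    hA.1.smul_mem (by rw [Real.norm_eq_abs, abs_neg, abs_div]; norm_num; linarith) hw
  refine ⟨(1 / 3 : ℝ) • c + (2 / 3 : ℝ) • (-(t / 2)) • w,
    hA.2 hc htw (by norm_num) (by norm_num) (by norm_num), ?_⟩
  simp only [smul_add, smul_smul]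
  module

theorem abs_apply_lt_of_forall_vadd_pos {E : Set X} (hE : Balanced ℝ E) {g : StrongDual ℝ X}
    {u : X} (hg : ∀ d ∈ u +ᵥ E, 0 < g d) {e : X} (he : e ∈ E) : |g e| < g u := by
  have h₁ := hg _ (vadd_mem_vadd_set he)
  have h₂ := hg _ (vadd_mem_vadd_set (hE.neg_mem_iff.2 he))
  rw [vadd_eq_add, map_add] at h₁ h₂
  rw [map_neg] at h₂
  exact abs_lt.2 ⟨by linarith, by linarith⟩

namespace IsCompatibleClass

variable {𝒞 : Set (Set X)} {C : Set X}

theorem smul_mem (h𝒞 : IsCompatibleClass 𝒞) (hC : C ∈ 𝒞) (a : ℝ) : a • C ∈ 𝒞 := by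
  simpa [Set.image_smul] using h𝒞.smul_add_mem C hC a 0

theorem vadd_mem (h𝒞 : IsCompatibleClass 𝒞) (hC : C ∈ 𝒞) (x : X) : x +ᵥ C ∈ 𝒞 := by
  have := h𝒞.smul_add_mem C hC 1 x
  simp only [one_smul] at this
  rwa [← Set.image_vadd, show ((x +ᵥ ·) : X → X) = (· + x) from funext fun y => add_comm x y]

theorem closedAbsConvexHull_mem' (h𝒞 : IsCompatibleClass 𝒞) (hC : C ∈ 𝒞) :
    closedAbsConvexHull ℝ C ∈ 𝒞 := by
  rw [closedAbsConvexHull_eq_closure_absConvexHull]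
  exact h𝒞.closedAbsConvexHull_mem C hC

end IsCompatibleClass

theorem mem_coneOf_ballOn_of_forall_sub_smul_mem {C A₀ : Set X} {f g : StrongDual ℝ X} {w : X}
    {ε γ : ℝ} (hε : 0 < ε) (hγ : 0 < γ) (hfw : ε / 4 ≤ f w)
    (hC : ∀ c ∈ C, c - (f c / f w) • w ∈ A₀) (hA₀ : ∀ a ∈ A₀, |g a| ≤ ε / 8 * γ)
    (hw : |g w - f w * γ| ≤ ε / 8 * γ) : g ∈ coneOf (ballOn C f ε) := by
  have hfw₀ : 0 < f w := by linarith
  set l := g w / f w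
  have hl : γ / 2 ≤ l := by
    rw [le_div_iff₀ hfw₀]
    nlinarith [(abs_le.1 hw).1]
  have hl₀ : 0 < l := by linarith
  have hlw : l * f w = g w := div_mul_cancel₀ _ hfw₀.ne'
  refine ⟨l, hl₀.le, l⁻¹ • g, ?_, (smul_inv_smul₀ hl₀.ne' g).symm⟩
  refine (semiNormOn_le (b := ε / 4) (by positivity) fun c hc => ?_).trans_lt (by linarith)
  have key : f c - l⁻¹ * g c = -(l⁻¹ * g (c - (f c / f w) • w)) := by
    rw [map_sub, map_smul, smul_eq_mul]
    field_simp
    linear_combination f c * hlw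
  change |f c - l⁻¹ * g c| ≤ ε / 4
  rw [key, abs_neg, abs_mul, abs_of_pos (inv_pos.2 hl₀), inv_mul_le_iff₀ hl₀]
  nlinarith [hA₀ _ (hC c hc)]

theorem mem_coneOf_ballOn_of_forall_vadd_pos {C A₀ E : Set X} {f g : StrongDual ℝ X} {u w : X}
    {ε : ℝ} (hε : 0 < ε) (hfw : ε / 4 ≤ f w) (hC : ∀ c ∈ C, c - (f c / f w) • w ∈ A₀)
    (hE : Balanced ℝ E) (hSE : (8 / ε) • (A₀ ∪ {w - f w • u}) ⊆ E)
    (hg : ∀ d ∈ u +ᵥ E, 0 < g d) : g ∈ coneOf (ballOn C f ε) := by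
  have hu : u ∈ u +ᵥ E := by
    simpa using vadd_mem_vadd_set (a := u) (hE.zero_mem ⟨_, hSE (smul_mem_smul_set (Or.inr rfl))⟩)
  have hgE : ∀ y ∈ A₀ ∪ {w - f w • u}, |g y| ≤ ε / 8 * g u := fun y hy => by
    have := abs_apply_lt_of_forall_vadd_pos hE hg (hSE (smul_mem_smul_set hy))
    rw [map_smul, smul_eq_mul, abs_mul, abs_of_pos (by positivity : 0 < 8 / ε)] at this
    calc |g y| = ε / 8 * (8 / ε * |g y|) := by field_simp
      _ ≤ ε / 8 * g u := by gcongr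
  exact mem_coneOf_ballOn_of_forall_sub_smul_mem hε (hg u hu) hfw hC
    (fun a ha => hgE a (Or.inl ha)) (by simpa using hgE _ (Or.inr rfl))

theorem exists_kernel_decomposition {𝒞 : Set (Set X)} (h𝒞 : IsCompatibleClass 𝒞) {C : Set X}
    (hC : C ∈ 𝒞) (hCb : C ⊆ closedBall 0 1) (f : StrongDual ℝ X) (hρ : 0 < semiNormOn C f) :
    ∃ w : X, ‖w‖ ≤ 1 ∧ semiNormOn C f / 2 < f w ∧ ∃ A₀ ∈ 𝒞, A₀ ⊆ closedBall 0 3 ∧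
      A₀ ⊆ f ⁻¹' {0} ∧ ∀ c ∈ C, c - (f c / f w) • w ∈ A₀ := by
  set A := closedAbsConvexHull ℝ C
  have hA : AbsConvex ℝ A := absConvex_convexClosedHull
  have hA1 : A ⊆ closedBall 0 1 := by
    simpa using closedAbsConvexHull_subset_preimage_closedBall (.id ℝ X) (by simpa using hCb)
  obtain ⟨w, hwA, hfw⟩ := exists_mem_lt_apply_of_lt_semiNormOn hA.1 subset_closedAbsConvexHull
    (by linarith : 0 ≤ semiNormOn C f / 2) (by linarith : semiNormOn C f / 2 < semiNormOn C f)
  have hfw₀ : 0 < f w := by linarith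
  refine ⟨w, mem_closedBall_zero_iff.1 (hA1 hwA), hfw, (3 : ℝ) • A ∩ f ⁻¹' {0},
    h𝒞.subset_mem _ (h𝒞.smul_mem (h𝒞.closedAbsConvexHull_mem' hC) 3) _ inter_subset_left,
    ?_, inter_subset_right, fun c hc => ⟨hA.sub_smul_mem_three_smul (subset_closedAbsConvexHull hc)
      hwA ?_, ?_⟩⟩
  · rintro _ ⟨⟨a, ha, rfl⟩, -⟩
    rw [mem_closedBall_zero_iff, norm_smul, Real.norm_of_nonneg (by norm_num)]
    linarith [mem_closedBall_zero_iff.1 (hA1 ha)]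
  · rw [abs_div, abs_of_pos hfw₀, div_le_iff₀ hfw₀]
    linarith [abs_apply_le_semiNormOn (isBounded_closedBall.subset hCb) f hc]
  · rw [mem_preimage, map_sub, map_smul, smul_eq_mul, div_mul_cancel₀ _ hfw₀.ne', sub_self,
      mem_singleton_iff]

theorem abs_apply_sub_apply_smul_le {f : StrongDual ℝ X} (hf : ‖f‖ ≤ 1) {w u : X}
    (hw : ‖w‖ ≤ 1) (hfu : f u ≤ 1) : |f (w - f w • u)| ≤ 1 - f u := by
  rw [map_sub, map_smul, smul_eq_mul, ← mul_one_sub, abs_mul, abs_of_nonneg (sub_nonneg.2 hfu)]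
  refine mul_le_of_le_one_left (sub_nonneg.2 hfu) ?_
  exact (f.le_opNorm w).trans (mul_le_one₀ hf (norm_nonneg w) hw)

theorem exists_cone_test_set {𝒞 : Set (Set X)} (h𝒞 : IsCompatibleClass 𝒞) {C : Set X} (hC : C ∈ 𝒞)
    (hCb : C ⊆ closedBall 0 1) {f : StrongDual ℝ X} (hf : ‖f‖ = 1) {ε : ℝ} (hε : 0 < ε)
    (hρ : ε ≤ semiNormOn C f) :
    ∃ D ∈ 𝒞, IsClosed D ∧ Convex ℝ D ∧ diam D ≤ 48 / ε ∧ 1 / 2 ≤ infDist 0 D ∧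
      ∀ g : StrongDual ℝ X, (∀ d ∈ D, 0 < g d) → g ∈ coneOf (ballOn C f ε) := by
  have hf_norm : ∀ v, |f v| ≤ ‖v‖ := fun v => by simpa [hf] using f.le_opNorm v
  have hρ1 : semiNormOn C f ≤ 1 := semiNormOn_le zero_le_one fun c hc =>
    (hf_norm c).trans (mem_closedBall_zero_iff.1 (hCb hc))
  obtain ⟨w, hw1, hfw, A₀, hA₀𝒞, hA₀3, hA₀f, hdecomp⟩ :=
    exists_kernel_decomposition h𝒞 hC hCb f (by linarith)
  obtain ⟨u, hu1, hfu⟩ := exists_norm_le_one_lt_apply (f := f) (r := 1 - ε / 32) (by linarith)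
  have hfu1 : f u ≤ 1 := (le_abs_self _).trans ((hf_norm u).trans hu1)
  set S := A₀ ∪ {w - f w • u}
  set E := closedAbsConvexHull ℝ ((8 / ε) • S)
  have hE : AbsConvex ℝ E := absConvex_convexClosedHull
  have hS3 : S ⊆ closedBall 0 3 := union_subset hA₀3 <| singleton_subset_iff.2 <| by
    rw [mem_closedBall_zero_iff]
    calc ‖w - f w • u‖ ≤ ‖w‖ + |f w| * ‖u‖ := by
          rw [← Real.norm_eq_abs, ← norm_smul]; exact norm_sub_le _ _
      _ ≤ 1 + 1 * 1 := by gcongr; exact (hf_norm w).trans hw1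
      _ ≤ 3 := by norm_num
  have hSf : S ⊆ f ⁻¹' closedBall 0 (ε / 32) := by
    refine union_subset (fun a ha => ?_) (singleton_subset_iff.2 ?_) <;>
      rw [mem_preimage, mem_closedBall_zero_iff, Real.norm_eq_abs]
    · rw [hA₀f ha, abs_zero]; positivity
    · linarith [abs_apply_sub_apply_smul_le hf.le hw1 hfu1]
  have hE_f := closedAbsConvexHull_smul_subset_preimage_closedBall f (by positivity : 0 ≤ 8 / ε) hSf
  have hE_norm : E ⊆ closedBall 0 (8 / ε * 3) := by
    simpa using closedAbsConvexHull_smul_subset_preimage_closedBall (.id ℝ X)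
      (by positivity : 0 ≤ 8 / ε) (by simpa using hS3)
  have hEne : E.Nonempty := ⟨_, subset_closedAbsConvexHull (smul_mem_smul_set (Or.inr rfl))⟩
  refine ⟨u +ᵥ E, h𝒞.vadd_mem (h𝒞.closedAbsConvexHull_mem'
    (h𝒞.smul_mem (h𝒞.union_singleton_mem _ hA₀𝒞 _) _)) u, isClosed_closedAbsConvexHull.vadd u,
    hE.2.vadd u, ?_, le_infDist_zero_of_le_apply hEne.vadd_set hf.le ?_,
    fun g hg => mem_coneOf_ballOn_of_forall_vadd_pos hε (by linarith) hdecomp hE.1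
      subset_closedAbsConvexHull hg⟩
  · rw [diam_vadd]
    exact (diam_le_of_subset_closedBall (by positivity) hE_norm).trans_eq (by ring)
  · rintro _ ⟨e, he, rfl⟩
    have hfe := abs_le.1 (mem_closedBall_zero_iff.1 (hE_f he))
    have h14 : 8 / ε * (ε / 32) = 1 / 4 := by field_simp; norm_num
    change 1 / 2 ≤ f (u + e)
    rw [map_add]
    linarith

theorem le_apply_of_mem_wslice {z y : X} {r η δ : ℝ} (hz : r + η ≤ ‖z‖) (hδ : δ ≤ 1)
    {g : StrongDual ℝ X} (hg : g ∈ wslice (‖z‖⁻¹ • z) δ) (hy : y ∈ closedBall z r) :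
    η - δ * (r + η) ≤ g y := by
  have hgz : ‖z‖ * (1 - δ) ≤ g z := by
    rcases eq_or_ne z 0 with rfl | hz0
    · simp
    have : g z = ‖z‖ * g (‖z‖⁻¹ • z) := by
      rw [map_smul, smul_eq_mul, ← mul_assoc, mul_inv_cancel₀ (norm_ne_zero_iff.2 hz0), one_mul]
    rw [this]
    exact mul_le_mul_of_nonneg_left hg.2.le (norm_nonneg z)
  have hgzy : g (z - y) ≤ r := by
    refine (le_abs_self _).trans ((g.le_opNorm _).trans ?_)
    rw [mem_closedBall, dist_eq_norm, norm_sub_rev] at hy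
    nlinarith [hg.1, norm_nonneg g, norm_nonneg (z - y)]
  rw [map_sub] at hgzy
  nlinarith

theorem exists_wslice_subset_coneOf_of_hasCUMIP {𝒞 : Set (Set X)} (h𝒞 : IsCompatibleClass 𝒞)
    (H : HasCUMIP 𝒞) {ε : ℝ} (hε : 0 < ε) :
    ∃ δ : ℝ, 0 < δ ∧ ∀ C ∈ 𝒞, C ⊆ closedBall (0 : X) 1 → ∀ f : StrongDual ℝ X, ‖f‖ = 1 →
      ∃ x : X, ‖x‖ = 1 ∧ wslice x δ ⊆ coneOf (ballOn C f ε) := by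
  obtain ⟨K, hK, η, hη, hη2, HU⟩ :=
    H (1 / 2) (by norm_num) (48 / ε + 2) (by linarith [show 0 < 48 / ε by positivity])
  set δ := η / (2 * (K + 1))
  refine ⟨δ, by positivity, fun C hC hCb f hf => ?_⟩
  rcases lt_or_ge (semiNormOn C f) ε with hρ | hρ
  · obtain ⟨u, -, hu⟩ := exists_norm_le_one_lt_apply (f := f) (r := 0) (by rw [hf]; exact one_pos)
    have hu0 : u ≠ 0 := by rintro rfl; simp at hu
    exact ⟨‖u‖⁻¹ • u, norm_smul_inv_norm hu0, fun g _ =>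
      mem_coneOf_ballOn_of_semiNormOn_lt (isBounded_closedBall.subset hCb) hρ g⟩
  obtain ⟨D, hD𝒞, hDcl, hDconv, hDdiam, hDdist, hDcone⟩ := exists_cone_test_set h𝒞 hC hCb hf hε hρ
  obtain ⟨z, r, hr, hrK, hDz, hzη⟩ := HU D hD𝒞 hDcl hDconv (hDdiam.trans (by linarith)) hDdist
  have hrz : r + η ≤ ‖z‖ := by
    rw [infDist_zero_closedBall hr.le] at hzη
    rcases le_max_iff.1 hzη with h | h <;> linarith
  have hz0 : z ≠ 0 := by rintro rfl; simp at hrz; linarith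
  have hδK : δ * (K + 1) = η / 2 := by simp only [δ]; field_simp
  have hδ1 : δ ≤ 1 := by
    have := div_le_self hη.le (show 1 ≤ 2 * (K + 1) by linarith)
    linarith
  refine ⟨‖z‖⁻¹ • z, norm_smul_inv_norm hz0, fun g hg => hDcone g fun d hd => ?_⟩
  have := le_apply_of_mem_wslice hrz hδ1 hg (hDz hd)
  nlinarith [mul_le_mul_of_nonneg_left (by linarith : r + η ≤ K + 1) (by positivity : 0 ≤ δ)]

theorem le_apply_of_wslice_subset_coneOf {C : Set X} (hC : Bornology.IsBounded C)
    {f : StrongDual ℝ X} (hf : ‖f‖ ≤ 1) {x u : X} (hx : ‖x‖ ≤ 1) (hu : u ∈ C) {κ δ : ℝ}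
    (hfu : κ ≤ f u) (hδ : 0 < δ) (hslice : wslice x δ ⊆ coneOf (ballOn C f κ))
    {g : StrongDual ℝ X} (hg : g ∈ wslice x (δ / 3)) : δ / 3 * f u ≤ g u := by
  have hβ : 0 < δ / 3 := by positivity
  have hfx : f x ≤ 1 :=
    (le_abs_self _).trans ((f.le_opNorm x).trans (mul_le_one₀ hf (norm_nonneg _) hx))
  have hh : (1 + δ / 3)⁻¹ • (g - (δ / 3) • f) ∈ wslice x δ := by
    refine ⟨?_, ?_⟩
    · rw [norm_smul, Real.norm_of_nonneg (by positivity), inv_mul_le_iff₀ (by positivity),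
        mul_one]
      calc ‖g - (δ / 3) • f‖ ≤ ‖g‖ + ‖(δ / 3) • f‖ := norm_sub_le _ _
        _ ≤ 1 + δ / 3 * 1 := by
          rw [norm_smul, Real.norm_of_nonneg hβ.le]; gcongr; exact hg.1
        _ = 1 + δ / 3 := by ring
    · change 1 - δ < (1 + δ / 3)⁻¹ * (g x - δ / 3 * f x)
      rw [lt_inv_mul_iff₀ (by positivity)]
      nlinarith [hg.2]
  obtain ⟨l, hl, a, ha, hla⟩ := hslice hh
  have hau : 0 ≤ a u := by linarith [(abs_lt.1 (abs_sub_lt_of_mem_ballOn hC ha hu)).2]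
  have hgu : g u = δ / 3 * f u + (1 + δ / 3) * (l * a u) := by
    have := congrArg (· u) hla
    change (1 + δ / 3)⁻¹ * (g u - δ / 3 * f u) = l * a u at this
    rw [← this]
    field_simp
    ring
  rw [hgu]
  nlinarith [mul_nonneg hl hau]

theorem le_apply_of_wslice_subset_coneOf_smul_union {C : Set X} (hC : Bornology.IsBounded C)
    {R ε κ δ : ℝ} (hR : 0 < R) (hε : 0 ≤ ε) {f : StrongDual ℝ X} (hf : ‖f‖ = 1)
    (hfC : ∀ c ∈ C, ε ≤ f c)
    {u x : X} (hu : ‖u‖ ≤ 1) (hκR : κ ≤ ε / (2 * R)) (hκ : κ ≤ 1 / 2) (hfu : 1 - κ < f u)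
    (hx : ‖x‖ = 1) (hδ : 0 < δ) (hslice : wslice x δ ⊆ coneOf (ballOn (R⁻¹ • C ∪ {u}) f κ))
    {g : StrongDual ℝ X} (hg : g ∈ wslice x (δ / 3)) {d : X} (hd : d ∈ C) :
    δ * ε / 18 ≤ g d := by
  have hC₁ : Bornology.IsBounded (R⁻¹ • C ∪ {u}) :=
    (hC.smul₀ R⁻¹).union Bornology.isBounded_singleton
  have hfu1 : f u ≤ 1 :=
    (le_abs_self _).trans ((f.le_opNorm u).trans (by rw [hf, one_mul]; exact hu))
  have hgu := le_apply_of_wslice_subset_coneOf hC₁ hf.le hx.le (Or.inr rfl) (by linarith) hδ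
    hslice hg
  obtain ⟨l, hl, a, ha, rfl⟩ := hslice (wslice_mono x (by linarith) hg)
  have hau := abs_lt.1 (abs_sub_lt_of_mem_ballOn hC₁ ha (Or.inr rfl))
  have had := abs_lt.1 (abs_sub_lt_of_mem_ballOn hC₁ ha (Or.inl (smul_mem_smul_set hd)))
  rw [map_smul, map_smul, smul_eq_mul, smul_eq_mul, ← mul_sub] at had
  change δ / 3 * f u ≤ l * a u at hgu
  change δ * ε / 18 ≤ l * a d
  have hl9 : δ / 9 ≤ l := by nlinarith [mul_nonneg hl (by linarith : 0 ≤ 3 / 2 - a u)]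
  have had' : ε / 2 ≤ a d := by
    have h1 : R⁻¹ * (f d - a d) < ε / (2 * R) := by linarith
    rw [inv_mul_lt_iff₀ hR, show R * (ε / (2 * R)) = ε / 2 by field_simp] at h1
    linarith [hfC d hd]
  nlinarith [mul_le_mul hl9 had' (by positivity) hl]

theorem subset_closedBall_of_forall_wslice {C : Set X} {R δ η t : ℝ} (hC : C ⊆ closedBall 0 R)
    {x : X} (hx : ‖x‖ = 1) (hη : 0 ≤ η) (hηt : η < t) (htδ : R + η ≤ t * δ / 3)
    (H : ∀ g ∈ wslice x (δ / 3), ∀ d ∈ C, η ≤ g d) :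
    C ⊆ closedBall (t • x) (t - η) ∧ η ≤ infDist 0 (closedBall (t • x) (t - η)) := by
  refine ⟨fun d hd => ?_, ?_⟩
  · rw [mem_closedBall, dist_comm, dist_eq_norm]
    refine norm_le_of_forall_dual_le fun g hg => ?_
    have hgx : g x ≤ 1 :=
      (le_abs_self _).trans ((g.le_opNorm x).trans (by rw [hx, mul_one]; exact hg))
    rw [map_sub, map_smul, smul_eq_mul]
    by_cases hslice : 1 - δ / 3 < g x
    · nlinarith [H g ⟨hg, hslice⟩ d hd]
    · have hgd : -g d ≤ R := (neg_le_abs _).trans ((g.le_opNorm d).trans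
        ((mul_le_of_le_one_left (norm_nonneg _) hg).trans (mem_closedBall_zero_iff.1 (hC hd))))
      nlinarith
  · rw [infDist_zero_closedBall (by linarith), norm_smul, hx, mul_one,
      Real.norm_of_nonneg (by linarith)]
    exact le_max_of_le_left (by linarith)

theorem exists_closedBall_of_forall_wslice_subset_coneOf {C : Set X} {R ε κ δ t : ℝ}
    (hR : 0 < R) (hε : 0 < ε) (hκ₀ : 0 < κ) (hκR : κ ≤ ε / (2 * R)) (hκ : κ ≤ 1 / 2) (hδ : 0 < δ)
    (hηt : δ * ε / 18 < t) (htδ : R + δ * ε / 18 ≤ t * δ / 3) (hCR : C ⊆ closedBall 0 R)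
    (hCconv : Convex ℝ C) (hCdist : ε ≤ infDist 0 C)
    (H : ∀ (u : X) (f : StrongDual ℝ X), R⁻¹ • C ∪ {u} ⊆ closedBall 0 1 → ‖f‖ = 1 →
      ∃ x : X, ‖x‖ = 1 ∧ wslice x δ ⊆ coneOf (ballOn (R⁻¹ • C ∪ {u}) f κ)) :
    ∃ x : X, C ⊆ closedBall (t • x) (t - δ * ε / 18) ∧
      δ * ε / 18 ≤ infDist 0 (closedBall (t • x) (t - δ * ε / 18)) := by
  obtain ⟨f, hf, hfC⟩ := exists_norm_eq_one_le_apply_of_le_infDist hCconv hε hCdist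
  obtain ⟨u, hu, hfu⟩ := exists_norm_le_one_lt_apply (f := f) (r := 1 - κ) (by linarith)
  have hC₁ : R⁻¹ • C ∪ {u} ⊆ closedBall 0 1 := by
    refine union_subset ((smul_set_mono hCR).trans_eq ?_)
      (singleton_subset_iff.2 (mem_closedBall_zero_iff.2 hu))
    rw [smul_closedBall' (inv_ne_zero hR.ne'), smul_zero,
      Real.norm_of_nonneg (inv_nonneg.2 hR.le), inv_mul_cancel₀ hR.ne']
  obtain ⟨x, hx, hslice⟩ := H u f hC₁ hf
  exact ⟨x, subset_closedBall_of_forall_wslice hCR hx (by positivity) hηt htδ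
    fun g hg d hd => le_apply_of_wslice_subset_coneOf_smul_union
      (isBounded_closedBall.subset hCR) hR hε.le hf hfC hu hκR hκ hfu hx hδ hslice hg hd⟩

theorem hasCUMIP_of_forall_wslice_subset_coneOf {𝒞 : Set (Set X)} (h𝒞 : IsCompatibleClass 𝒞)
    (H : ∀ ε : ℝ, 0 < ε → ∃ δ : ℝ, 0 < δ ∧ ∀ C ∈ 𝒞, C ⊆ closedBall (0 : X) 1 →
      ∀ f : StrongDual ℝ X, ‖f‖ = 1 → ∃ x : X, ‖x‖ = 1 ∧ wslice x δ ⊆ coneOf (ballOn C f ε)) :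
    HasCUMIP 𝒞 := by
  intro ε hε M hM
  set R := 2 * M + ε + 1
  have hR : 0 < R := by positivity
  obtain ⟨δ₀, hδ₀, Hδ⟩ := H (min (ε / (2 * R)) (1 / 2)) (by positivity)
  set δ := min δ₀ 1
  have hδ : 0 < δ := by positivity
  have hδ1 : δ ≤ 1 := min_le_right _ _
  set t := 3 * (R + ε) / δ
  have ht : t * δ / 3 = R + ε := by simp only [t]; field_simp
  have hηε : δ * ε / 18 ≤ ε := by nlinarith [mul_le_mul_of_nonneg_right hδ1 hε.le]
  have hηt : δ * ε / 18 < t := by nlinarith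
  refine ⟨max t M, by positivity, δ * ε / 18, by positivity, hηε,
    fun C hC hCcl hCconv hCdiam hCdist => ?_⟩
  have hCb := h𝒞.bounded C hC
  rcases le_or_gt (M + ε + 1) (infDist 0 C) with hfar | hnear
  · obtain ⟨c, hc⟩ : C.Nonempty := nonempty_iff_ne_empty.2 fun h => by
      rw [h, infDist_empty] at hCdist; linarith
    obtain ⟨hsub, hdist⟩ := subset_closedBall_and_sub_le_infDist hCb hc (by linarith) hCdiam
    exact ⟨c, M, by linarith, le_max_right _ _, hsub, by linarith⟩
  obtain ⟨x, hsub, hdist⟩ := exists_closedBall_of_forall_wslice_subset_coneOf (t := t) hR hε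
    (by positivity) (min_le_left _ _) (min_le_right _ _) hδ hηt (by linarith)
    ((subset_closedBall_zero_of_infDist_lt hCb hnear hCdiam).trans
      (closedBall_subset_closedBall (by linarith))) hCconv hCdist
    fun u f hC₁ hf => (Hδ _ (h𝒞.union_singleton_mem _ (h𝒞.smul_mem hC _) u) hC₁ f hf).imp
      fun x hx => ⟨hx.1, (wslice_mono x (min_le_left _ _)).trans hx.2⟩
  exact ⟨t • x, t - δ * ε / 18, by linarith,
    (sub_le_self _ (by positivity)).trans (le_max_left _ _), hsub, hdist⟩

theorem stmt19_general (𝒞 : Set (Set X)) (h𝒞 : IsCompatibleClass 𝒞) :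
    HasCUMIP 𝒞 ↔
      ∀ ε : ℝ, 0 < ε → ∃ δ : ℝ, 0 < δ ∧ ∀ C ∈ 𝒞, C ⊆ closedBall (0 : X) 1 →
        ∀ f : StrongDual ℝ X, ‖f‖ = 1 →
          ∃ x : X, ‖x‖ = 1 ∧ wslice x δ ⊆ coneOf (ballOn C f ε) :=
  ⟨fun H _ hε => exists_wslice_subset_coneOf_of_hasCUMIP h𝒞 H hε,
    hasCUMIP_of_forall_wslice_subset_coneOf h𝒞⟩

theorem stmt19 [CompleteSpace X] (𝒞 : Set (Set X)) (h𝒞 : IsCompatibleClass 𝒞) :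
    HasCUMIP 𝒞 ↔
      ∀ ε : ℝ, 0 < ε → ∃ δ : ℝ, 0 < δ ∧ ∀ C ∈ 𝒞, C ⊆ closedBall (0 : X) 1 →
        ∀ f : StrongDual ℝ X, ‖f‖ = 1 →
          ∃ x : X, ‖x‖ = 1 ∧ wslice x δ ⊆ coneOf (ballOn C f ε) :=
  stmt19_general 𝒞 h𝒞
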